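/- For all natural numbers n ≥ 1 and k ≥ 2: n^k · (0.76 · n)^(n·k) < n·k · (0.76 · n · k)^(n·k), i.e., the GBA-product complexity bound for Rabin complementation is strictly better than complementing a k·n-state Büchi automaton obtained by degeneralization. -/

import Mathlib

/-!
Since `(0.76 n k)^(n k) = k^(n k) (0.76 n)^(n k)`, the common factor `(0.76 n)^(n k)` cancels and
it remains to see `n^k < n k · k^(n k)`. This follows from `n < k^n` (as `k ≥ 2`), raised to the
`k`-th power, together with `n k ≥ 1`.
-/

theorem Nat.pow_lt_pow_mul_self {k : ℕ} (hk : 2 ≤ k) (n : ℕ) : n ^ k < k ^ (n * k) := by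
  rw [pow_mul]
  exact Nat.pow_lt_pow_left (Nat.lt_pow_self hk) (by omega)

theorem Nat.pow_lt_mul_mul_pow_mul {n k : ℕ} (hn : 1 ≤ n) (hk : 2 ≤ k) :
    n ^ k < n * k * k ^ (n * k) :=
  calc n ^ k < k ^ (n * k) := Nat.pow_lt_pow_mul_self hk n
    _ ≤ n * k * k ^ (n * k) := Nat.le_mul_of_pos_left _ (by positivity)

theorem pow_mul_pow_lt_mul_mul_pow {c : ℝ} (hc : 0 < c) {n k : ℕ} (hn : 1 ≤ n) (hk : 2 ≤ k) :
    (n : ℝ) ^ k * (c * n) ^ (n * k) < n * k * (c * n * k) ^ (n * k) := by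
  have hcn : 0 < (c * n) ^ (n * k) := by positivity
  have hnat : (n : ℝ) ^ k < n * k * (k : ℝ) ^ (n * k) := by
    exact_mod_cast Nat.pow_lt_mul_mul_pow_mul hn hk
  calc (n : ℝ) ^ k * (c * n) ^ (n * k) < n * k * (k : ℝ) ^ (n * k) * (c * n) ^ (n * k) :=
        mul_lt_mul_of_pos_right hnat hcn
    _ = n * k * (c * n * k) ^ (n * k) := by rw [mul_pow (c * n)]; ring

theorem rabin_bound_lt_degeneralization_bound (n k : ℕ) (hn : 1 ≤ n) (hk : 2 ≤ k) :
    (n : ℝ) ^ k * (0.76 * n) ^ (n * k) <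
      (n : ℝ) * k * (0.76 * n * k) ^ (n * k) :=
  pow_mul_pow_lt_mul_mul_pow (by norm_num) hn hk
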